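/- With the notation of the (b,a)-transform e^{(b,a)} on W = V ⊕ 𝔤 ⊕ V*, the composition law e^{(b,a)} ∘ e^{(b',a')} = e^{(b + b' + c(a ∧ a'), a + a')} holds, where c(a ∧ a')(X,Y) = c(a(X), a'(Y)) − c(a(Y), a'(X)). In particular, the operation (b,a)·(b',a') = (b + b' + c(a ∧ a'), a + a') makes Λ²V* × (V* ⊗ 𝔤) into a group with identity (0,0) and inverse (b,a)⁻¹ = (−b, −a). -/

import Mathlib

/-- The generalized tangent space `W = V ⊕ 𝔤 ⊕ V*`. -/
abbrev GenW (V G : Type*) [AddCommGroup V] [Module ℝ V] [AddCommGroup G] [Module ℝ G] :=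
  V × G × Module.Dual ℝ V

/-- The `(b,a)`-transform
`e^{(b,a)}(X + r + ξ) = X + (r + a(X)) + (ξ + b(X) − c(a(X), a(·)) − 2c(a(·), r))`. -/
noncomputable def baTransform {V G : Type*} [AddCommGroup V] [Module ℝ V] [AddCommGroup G]
    [Module ℝ G] (c : G →ₗ[ℝ] G →ₗ[ℝ] ℝ) (b : V →ₗ[ℝ] V →ₗ[ℝ] ℝ) (a : V →ₗ[ℝ] G)
    (w : GenW V G) : GenW V G :=
  (w.1, w.2.1 + a w.1,
    w.2.2 + b w.1 - (c (a w.1)) ∘ₗ a - (2 : ℝ) • ((c.flip w.2.1) ∘ₗ a))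

/-- `c(a ∧ a')(X,Y) = c(a(X), a'(Y)) − c(a(Y), a'(X))`, as a bilinear form on `V`. -/
noncomputable def cWedge {V G : Type*} [AddCommGroup V] [Module ℝ V] [AddCommGroup G]
    [Module ℝ G] (c : G →ₗ[ℝ] G →ₗ[ℝ] ℝ) (a a' : V →ₗ[ℝ] G) : V →ₗ[ℝ] V →ₗ[ℝ] ℝ :=
  c.compl₁₂ a a' - (c.compl₁₂ a a').flip

/-- The group operation `(b,a)·(b',a') = (b + b' + c(a ∧ a'), a + a')` on
`Λ²V* × (V* ⊗ 𝔤)`. -/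
noncomputable def baMul {V G : Type*} [AddCommGroup V] [Module ℝ V] [AddCommGroup G]
    [Module ℝ G] (c : G →ₗ[ℝ] G →ₗ[ℝ] ℝ)
    (p q : (V →ₗ[ℝ] V →ₗ[ℝ] ℝ) × (V →ₗ[ℝ] G)) :
    (V →ₗ[ℝ] V →ₗ[ℝ] ℝ) × (V →ₗ[ℝ] G) :=
  (p.1 + q.1 + cWedge c p.2 q.2, p.2 + q.2)

/-!
The `𝔤`-component of `e^{(b,a)}` is additive in `a`, and composing two transforms produces
exactly one cross term, `-2 c(a(Y), a'(X))`, in the `V*` component; by the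
symmetry of `c` it splits as `-c(a(X),a'(Y)) - c(a'(X),a(Y))` plus the antisymmetric part
`c(a ∧ a')(X,Y)`. The group laws follow because `cWedge c` is biadditive and, again by symmetry
of `c`, vanishes on `(a, -a)`.
-/

section

variable {V G : Type*} [AddCommGroup V] [Module ℝ V] [AddCommGroup G] [Module ℝ G]
  (c : G →ₗ[ℝ] G →ₗ[ℝ] ℝ)

@[simp]
theorem cWedge_apply (a a' : V →ₗ[ℝ] G) (X Y : V) :
    cWedge c a a' X Y = c (a X) (a' Y) - c (a Y) (a' X) :=
  rfl

theorem cWedge_add_left (a₁ a₂ a' : V →ₗ[ℝ] G) :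
    cWedge c (a₁ + a₂) a' = cWedge c a₁ a' + cWedge c a₂ a' := by
  ext X Y
  simp only [cWedge_apply, LinearMap.add_apply, map_add]
  ring

theorem cWedge_add_right (a a'₁ a'₂ : V →ₗ[ℝ] G) :
    cWedge c a (a'₁ + a'₂) = cWedge c a a'₁ + cWedge c a a'₂ := by
  ext X Y
  simp only [cWedge_apply, LinearMap.add_apply, map_add]
  ring

@[simp]
theorem cWedge_zero_left (a' : V →ₗ[ℝ] G) : cWedge c 0 a' = 0 := by
  ext X Y
  simp

@[simp]
theorem cWedge_zero_right (a : V →ₗ[ℝ] G) : cWedge c a 0 = 0 := by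
  ext X Y
  simp

theorem cWedge_neg_right_self (hc : ∀ r s, c r s = c s r) (a : V →ₗ[ℝ] G) :
    cWedge c a (-a) = 0 := by
  ext X Y
  simp [hc (a X) (a Y)]

@[simp]
theorem baTransform_fst (b : V →ₗ[ℝ] V →ₗ[ℝ] ℝ) (a : V →ₗ[ℝ] G) (w : GenW V G) :
    (baTransform c b a w).1 = w.1 :=
  rfl

@[simp]
theorem baTransform_snd_fst (b : V →ₗ[ℝ] V →ₗ[ℝ] ℝ) (a : V →ₗ[ℝ] G) (w : GenW V G) :
    (baTransform c b a w).2.1 = w.2.1 + a w.1 :=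
  rfl

theorem baTransform_apply_snd_snd (b : V →ₗ[ℝ] V →ₗ[ℝ] ℝ) (a : V →ₗ[ℝ] G) (w : GenW V G)
    (Y : V) :
    (baTransform c b a w).2.2 Y = w.2.2 Y + b w.1 Y - c (a w.1) (a Y) - 2 * c (a Y) w.2.1 :=
  rfl

theorem baTransform_baTransform (hc : ∀ r s, c r s = c s r) (b b' : V →ₗ[ℝ] V →ₗ[ℝ] ℝ)
    (a a' : V →ₗ[ℝ] G) (w : GenW V G) :
    baTransform c b a (baTransform c b' a' w)
      = baTransform c (b + b' + cWedge c a a') (a + a') w := by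
  refine Prod.ext rfl (Prod.ext ?_ ?_)
  · simp only [baTransform_snd_fst, baTransform_fst, LinearMap.add_apply]
    abel
  · ext Y
    simp only [baTransform_apply_snd_snd, baTransform_fst, baTransform_snd_fst, cWedge_apply,
      LinearMap.add_apply, map_add]
    rw [hc (a' w.1) (a Y)]
    ring

theorem baMul_assoc (p q r : (V →ₗ[ℝ] V →ₗ[ℝ] ℝ) × (V →ₗ[ℝ] G)) :
    baMul c (baMul c p q) r = baMul c p (baMul c q r) := by
  simp only [baMul, cWedge_add_left, cWedge_add_right, Prod.mk.injEq]
  constructor <;> abel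

theorem baMul_zero (p : (V →ₗ[ℝ] V →ₗ[ℝ] ℝ) × (V →ₗ[ℝ] G)) : baMul c p (0, 0) = p := by
  simp [baMul]

theorem zero_baMul (p : (V →ₗ[ℝ] V →ₗ[ℝ] ℝ) × (V →ₗ[ℝ] G)) : baMul c (0, 0) p = p := by
  simp [baMul]

theorem baMul_neg (hc : ∀ r s, c r s = c s r) (p : (V →ₗ[ℝ] V →ₗ[ℝ] ℝ) × (V →ₗ[ℝ] G)) :
    baMul c p (-p.1, -p.2) = (0, 0) := by
  rw [baMul, cWedge_neg_right_self c hc, add_zero]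
  exact Prod.ext (add_neg_cancel p.1) (add_neg_cancel p.2)

end

theorem baTransform_comp_general
    {V G : Type*} [AddCommGroup V] [Module ℝ V]
    [AddCommGroup G] [Module ℝ G]
    (c : G →ₗ[ℝ] G →ₗ[ℝ] ℝ) (hc_symm : ∀ r s, c r s = c s r) :
    (∀ (b b' : V →ₗ[ℝ] V →ₗ[ℝ] ℝ) (a a' : V →ₗ[ℝ] G) (w : GenW V G),
      baTransform c b a (baTransform c b' a' w)
        = baTransform c (b + b' + cWedge c a a') (a + a') w) ∧
    (∀ p q r : (V →ₗ[ℝ] V →ₗ[ℝ] ℝ) × (V →ₗ[ℝ] G),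
      baMul c (baMul c p q) r = baMul c p (baMul c q r)) ∧
    (∀ p : (V →ₗ[ℝ] V →ₗ[ℝ] ℝ) × (V →ₗ[ℝ] G), baMul c p (0, 0) = p) ∧
    (∀ p : (V →ₗ[ℝ] V →ₗ[ℝ] ℝ) × (V →ₗ[ℝ] G), baMul c (0, 0) p = p) ∧
    (∀ p : (V →ₗ[ℝ] V →ₗ[ℝ] ℝ) × (V →ₗ[ℝ] G), baMul c p (-p.1, -p.2) = (0, 0)) :=
  ⟨baTransform_baTransform c hc_symm, baMul_assoc c, baMul_zero c, zero_baMul c,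
    baMul_neg c hc_symm⟩

/-- the composition law
`e^{(b,a)} ∘ e^{(b',a')} = e^{(b + b' + c(a ∧ a'), a + a')}` holds, and the induced
operation makes `Λ²V* × (V* ⊗ 𝔤)` into a group with identity `(0,0)` and inverse
`(b,a)⁻¹ = (−b,−a)`. -/
theorem baTransform_comp
    {V G : Type*} [AddCommGroup V] [Module ℝ V] [FiniteDimensional ℝ V]
    [AddCommGroup G] [Module ℝ G]
    (c : G →ₗ[ℝ] G →ₗ[ℝ] ℝ) (hc_symm : ∀ r s, c r s = c s r) :
    (∀ (b b' : V →ₗ[ℝ] V →ₗ[ℝ] ℝ) (a a' : V →ₗ[ℝ] G) (w : GenW V G),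
      baTransform c b a (baTransform c b' a' w)
        = baTransform c (b + b' + cWedge c a a') (a + a') w) ∧
    (∀ p q r : (V →ₗ[ℝ] V →ₗ[ℝ] ℝ) × (V →ₗ[ℝ] G),
      baMul c (baMul c p q) r = baMul c p (baMul c q r)) ∧
    (∀ p : (V →ₗ[ℝ] V →ₗ[ℝ] ℝ) × (V →ₗ[ℝ] G), baMul c p (0, 0) = p) ∧
    (∀ p : (V →ₗ[ℝ] V →ₗ[ℝ] ℝ) × (V →ₗ[ℝ] G), baMul c (0, 0) p = p) ∧
    (∀ p : (V →ₗ[ℝ] V →ₗ[ℝ] ℝ) × (V →ₗ[ℝ] G), baMul c p (-p.1, -p.2) = (0, 0)) :=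
  baTransform_comp_general c hc_symm
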